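/- Let p ≥ 1, let B be a real p×p matrix, let α > 0, and let A = B ⊙ B denote the entrywise (Hadamard) square of B. Then tr[(I_p + α·A)^p] ≥ p, and equality tr[(I_p + α·A)^p] = p holds if and only if the directed graph on vertices {1,…,p} with an edge i → j whenever B_{ij} ≠ 0 contains no directed cycle. -/
import Mathlib

open Matrix

-- entrywise nonneg of powers
lemma powEntryNonneg {p : ℕ} {A : Matrix (Fin p) (Fin p) ℝ}
    (h : ∀ i j, 0 ≤ A i j) : ∀ k i j, 0 ≤ (A ^ k) i j := by
  intro k
  induction k with
  | zero => intro i j; simp [Matrix.one_apply]; split <;> norm_num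
  | succ k ih =>
      intro i j
      rw [pow_succ, Matrix.mul_apply]
      exact Finset.sum_nonneg fun l _ => mul_nonneg (ih i l) (h l j)

lemma walkEntryPos {p : ℕ} {A : Matrix (Fin p) (Fin p) ℝ}
    (h : ∀ i j, 0 ≤ A i j) :
    ∀ k (w : ℕ → Fin p), (∀ i < k, 0 < A (w i) (w (i+1))) →
      0 < (A ^ k) (w 0) (w k) := by
  intro k
  induction k with
  | zero => intro w _; simp [Matrix.one_apply]
  | succ k ih =>
      intro w hw
      rw [pow_succ, Matrix.mul_apply]
      apply Finset.sum_pos'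
      · exact fun l _ => mul_nonneg (powEntryNonneg h k _ _) (h _ _)
      · exact ⟨w k, Finset.mem_univ _,
          mul_pos (ih w fun i hi => hw i (Nat.lt_succ_of_lt hi)) (hw k (Nat.lt_succ_self k))⟩

lemma entryNeZero_transGen {p : ℕ} {B A : Matrix (Fin p) (Fin p) ℝ}
    (hA : ∀ i j, A i j = B i j * B i j) :
    ∀ k x y, (A ^ (k+1)) x y ≠ 0 → Relation.TransGen (fun i j => B i j ≠ 0) x y := by
  intro k
  induction k with
  | zero =>
      intro x y hxy
      rw [pow_one] at hxy
      rw [hA] at hxy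
      exact Relation.TransGen.single (left_ne_zero_of_mul hxy)
  | succ k ih =>
      intro x y hxy
      rw [pow_succ, Matrix.mul_apply] at hxy
      obtain ⟨l, -, hl⟩ := Finset.exists_ne_zero_of_sum_ne_zero hxy
      have h1 : B l y ≠ 0 := by
        intro h0
        apply right_ne_zero_of_mul hl
        rw [hA, h0, mul_zero]
      exact (ih x l (left_ne_zero_of_mul hl)).tail h1

lemma transGen_walk {p : ℕ} {R : Fin p → Fin p → Prop} {x y : Fin p}
    (h : Relation.TransGen R x y) :
    ∃ k, 1 ≤ k ∧ ∃ w : ℕ → Fin p, w 0 = x ∧ w k = y ∧ ∀ i < k, R (w i) (w (i+1)) := by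
  induction h with
  | @single b hxb =>
      refine ⟨1, le_refl _, fun n => if n = 0 then x else b, by simp, by simp, ?_⟩
      intro i hi
      interval_cases i
      simpa using hxb
  | @tail b c hxb hbc ih =>
      obtain ⟨k, hk, w, hw0, hwk, hedges⟩ := ih
      refine ⟨k + 1, by omega, fun n => if n ≤ k then w n else c, by simpa using hw0,
        by simp, ?_⟩
      intro i hi
      rcases lt_or_eq_of_le (Nat.lt_succ_iff.mp hi) with hik | hik
      · simp only [if_pos hik.le, if_pos (Nat.succ_le_of_lt hik)]
        exact hedges i hik
      · rw [hik]
        simp only [if_pos (le_refl k), if_neg (Nat.not_succ_le_self k)]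
        rw [hwk]
        exact hbc

lemma walk_shorten {p : ℕ} {R : Fin p → Fin p → Prop} {k : ℕ} {w : ℕ → Fin p}
    (hk : 1 ≤ k) (hclosed : w k = w 0) (hedges : ∀ i < k, R (w i) (w (i+1))) :
    ∃ k', 1 ≤ k' ∧ k' ≤ p ∧ ∃ w' : ℕ → Fin p, w' k' = w' 0 ∧
      ∀ i < k', R (w' i) (w' (i+1)) := by
  rcases le_or_gt k p with h | h
  · exact ⟨k, hk, h, w, hclosed, hedges⟩
  · obtain ⟨a, b, hab, hw⟩ := Fintype.exists_ne_map_eq_of_card_lt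
      (fun n : Fin (p+1) => w n) (by simp)
    wlog hlt : (a : ℕ) < (b : ℕ) generalizing a b
    · exact this b a hab.symm hw.symm (by omega)
    refine ⟨(b : ℕ) - (a : ℕ), by omega, by omega, fun m => w ((a : ℕ) + m), ?_, ?_⟩
    · show w ((a : ℕ) + ((b : ℕ) - (a : ℕ))) = w ((a : ℕ) + 0)
      have h1 : (a : ℕ) + ((b : ℕ) - (a : ℕ)) = (b : ℕ) := by omega
      rw [h1]
      simpa using hw.symm
    · intro i hi
      have h2 : (a : ℕ) + i < k := by omega
      have h3 := hedges ((a : ℕ) + i) h2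
      show R (w ((a : ℕ) + i)) (w ((a : ℕ) + (i + 1)))
      rwa [← Nat.add_assoc]

lemma trace_expand {p : ℕ} (A : Matrix (Fin p) (Fin p) ℝ) (α : ℝ) :
    trace ((1 + α • A) ^ p) =
      (∑ i ∈ Finset.range p,
        (p.choose (i+1) : ℝ) * α ^ (i+1) * trace (A ^ (i+1))) + (p : ℝ) := by
  have hc : Commute (α • A) (1 : Matrix (Fin p) (Fin p) ℝ) := Commute.one_right _
  have h1 : (1 : Matrix (Fin p) (Fin p) ℝ) + α • A = α • A + 1 := add_comm _ _
  rw [h1, hc.add_pow]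
  rw [trace_sum]
  have hterm : ∀ m, trace ((α • A) ^ m * 1 ^ (p - m) * (p.choose m : Matrix (Fin p) (Fin p) ℝ))
      = (p.choose m : ℝ) * α ^ m * trace (A ^ m) := by
    intro m
    rw [one_pow, mul_one, smul_pow]
    rw [show ((p.choose m : Matrix (Fin p) (Fin p) ℝ)) = (p.choose m : ℝ) • 1 by
      simp [Matrix.smul_one_eq_diagonal]; rfl]
    simp only [Matrix.mul_smul, mul_one, trace_smul, smul_eq_mul]
    ring
  rw [Finset.sum_congr rfl fun m _ => hterm m]
  rw [Finset.sum_range_succ']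
  simp [mul_comm]

/-- The NOTEARS acyclicity characterization underlying Equation (7): for a real `p × p`
matrix `B`, `α > 0`, and `A = B ⊙ B` its entrywise square, one has
`tr[(I + α A)^p] ≥ p`, with equality iff the directed graph with an edge `i → j`
whenever `B i j ≠ 0` has no directed cycle. -/
theorem acyclicity_trace_constraint
    (p : ℕ) (hp : 1 ≤ p)
    (B : Matrix (Fin p) (Fin p) ℝ)
    (α : ℝ) (hα : 0 < α)
    (A : Matrix (Fin p) (Fin p) ℝ) (hA : ∀ i j, A i j = B i j * B i j) :
    (p : ℝ) ≤ trace ((1 + α • A) ^ p) ∧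
      (trace ((1 + α • A) ^ p) = (p : ℝ) ↔
        ∀ x : Fin p, ¬ Relation.TransGen (fun i j => B i j ≠ 0) x x) := by
  have hA0 : ∀ i j, 0 ≤ A i j := fun i j => (hA i j) ▸ mul_self_nonneg _
  have htrnn : ∀ k, 0 ≤ trace (A ^ k) := fun k =>
    Finset.sum_nonneg fun i _ => powEntryNonneg hA0 k i i
  have hterm_nn : ∀ i ∈ Finset.range p,
      0 ≤ (p.choose (i+1) : ℝ) * α ^ (i+1) * trace (A ^ (i+1)) := fun i _ =>
    mul_nonneg (mul_nonneg (by positivity) (by positivity)) (htrnn _)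
  have hexp := trace_expand A α
  constructor
  · rw [hexp]
    exact le_add_of_nonneg_left (Finset.sum_nonneg hterm_nn)
  · rw [hexp]
    constructor
    · -- equality → no cycle
      intro heq x hx
      have hsum0 : ∑ i ∈ Finset.range p,
          (p.choose (i+1) : ℝ) * α ^ (i+1) * trace (A ^ (i+1)) = 0 := by linarith
      have hzero := (Finset.sum_eq_zero_iff_of_nonneg hterm_nn).mp hsum0
      -- extract a short closed walk
      obtain ⟨k, hk1, w, hw0, hwk, hedges⟩ := transGen_walk hx
      obtain ⟨k', hk'1, hk'p, w', hclosed', hedges'⟩ :=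
        walk_shorten (R := fun i j => B i j ≠ 0) hk1 (hwk.trans hw0.symm) hedges
      -- positive diagonal entry
      have hApos : ∀ i < k', 0 < A (w' i) (w' (i+1)) := fun i hi => by
        rw [hA]; exact mul_self_pos.mpr (hedges' i hi)
      have hpos : 0 < (A ^ k') (w' 0) (w' k') := walkEntryPos hA0 k' w' hApos
      rw [hclosed'] at hpos
      have htrpos : 0 < trace (A ^ k') := by
        apply Finset.sum_pos'
        · exact fun i _ => powEntryNonneg hA0 k' i i
        · exact ⟨w' 0, Finset.mem_univ _, hpos⟩
      have hk'' : k' - 1 ∈ Finset.range p := Finset.mem_range.mpr (by omega)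
      have := hzero (k' - 1) hk''
      rw [show k' - 1 + 1 = k' by omega] at this
      have hCpos : (0 : ℝ) < (p.choose k' : ℝ) :=
        Nat.cast_pos.mpr (Nat.choose_pos hk'p)
      have hprod : 0 < (p.choose k' : ℝ) * α ^ k' * trace (A ^ k') :=
        mul_pos (mul_pos hCpos (pow_pos hα k')) htrpos
      linarith
    · -- no cycle → equality
      intro hnocycle
      have hzero : ∀ i ∈ Finset.range p,
          (p.choose (i+1) : ℝ) * α ^ (i+1) * trace (A ^ (i+1)) = 0 := by
        intro i _
        have : trace (A ^ (i+1)) = 0 := by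
          by_contra htr
          obtain ⟨y, -, hy⟩ := Finset.exists_ne_zero_of_sum_ne_zero htr
          exact hnocycle y (entryNeZero_transGen hA i y y hy)
        rw [this, mul_zero]
      rw [Finset.sum_eq_zero hzero, zero_add]
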